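/- arXiv:1811.05502 — 4 statements merged into one kernel-verified Lean document; each statement's English description precedes it below -/
import Mathlib

section
/- Let P be a partially ordered set and f : ℕ^n → P a map such that (1) f is antitone (a ≤ b implies f(a) ≥ f(b)) and (2) for every strictly increasing chain a₁ < a₂ < ... in ℕ^n, the decreasing chain f(a₁) ≥ f(a₂) ≥ ... is eventually constant. Then there exists a finite subset B of ℕ^n such that for every a ∈ ℕ^n there is b ∈ B with b ≤ a and f(a) = f(b). -/
/-!
Take `B` to be the elements minimal in their fibre `{b | f b = f a}`; every `a` lies above one of
them by well-foundedness. If there were infinitely many, Dickson's lemma would give a strictly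
increasing sequence of them, on which `f` is eventually constant, so one of them would lie
strictly above another element of its own fibre.
-/

section

variable {α β : Type*} [PartialOrder α] [WellQuasiOrderedLE α]

theorem Set.Infinite.exists_strictMono_mem {s : Set α} (hs : s.Infinite) :
    ∃ a : ℕ → α, StrictMono a ∧ ∀ k, a k ∈ s := by
  let e := hs.natEmbedding s
  obtain ⟨g, hg⟩ := wellQuasiOrdered_le.exists_monotone_subseq fun k ↦ (e k : α)
  have hinj : Function.Injective fun k ↦ (e (g k) : α) :=
    fun _ _ h ↦ g.injective (e.injective (Subtype.ext h))
  exact ⟨_, Monotone.strictMono_of_injective (fun _ _ ↦ hg _ _) hinj, fun k ↦ (e (g k)).2⟩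

theorem finite_setOf_minimal_fiber (f : α → β)
    (hchain : ∀ a : ℕ → α, StrictMono a → ∃ N, ∀ k ≥ N, f (a k) = f (a N)) :
    {a | Minimal (fun b ↦ f b = f a) a}.Finite := by
  by_contra hinf
  obtain ⟨a, ha, hmin⟩ := Set.Infinite.exists_strictMono_mem hinf
  obtain ⟨N, hN⟩ := hchain a ha
  have hmin_succ : Minimal (fun b ↦ f b = f (a (N + 1))) (a (N + 1)) := hmin (N + 1)
  exact hmin_succ.not_lt (hN (N + 1) N.le_succ).symm (ha N.lt_succ_self)

end

theorem finite_basis_lemma_general {n : ℕ} {P : Type*}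
    (f : (Fin n → ℕ) → P)
    (hchain : ∀ a : ℕ → (Fin n → ℕ), StrictMono a →
      ∃ N : ℕ, ∀ k ≥ N, f (a k) = f (a N)) :
    ∃ B : Finset (Fin n → ℕ), ∀ a : Fin n → ℕ,
      ∃ b ∈ B, b ≤ a ∧ f a = f b := by
  have hfin := finite_setOf_minimal_fiber f hchain
  refine ⟨hfin.toFinset, fun a ↦ ?_⟩
  obtain ⟨b, hba, hb⟩ := exists_minimal_le_of_wellFoundedLT (fun b ↦ f b = f a) a rfl
  refine ⟨b, hfin.mem_toFinset.mpr ?_, hba, hb.prop.symm⟩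
  rwa [Set.mem_ofPred_eq, hb.prop]

theorem finite_basis_lemma {n : ℕ} {P : Type*} [PartialOrder P]
    (f : (Fin n → ℕ) → P) (hf : Antitone f)
    (hchain : ∀ a : ℕ → (Fin n → ℕ), StrictMono a →
      ∃ N : ℕ, ∀ k ≥ N, f (a k) = f (a N)) :
    ∃ B : Finset (Fin n → ℕ), ∀ a : Fin n → ℕ,
      ∃ b ∈ B, b ≤ a ∧ f a = f b :=
  finite_basis_lemma_general f hchain
end

section
/- Let P be a partially ordered set and f : ℕ^n → P an antitone map such that every decreasing chain f(a₁) ≥ f(a₂) ≥ ... along strictly increasing sequences a₁ < a₂ < ... in ℕ^n stabilizes. Then there exists b₀ ∈ ℕ^n such that f(a) = f(b₀) for every a ≥ b₀. -/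
theorem eventually_constant_above {n : ℕ} {P : Type*} [PartialOrder P]
    (f : (Fin n → ℕ) → P) (hf : Antitone f)
    (hchain : ∀ a : ℕ → (Fin n → ℕ), StrictMono a →
      ∃ N : ℕ, ∀ k ≥ N, f (a k) = f (a N)) :
    ∃ b₀ : Fin n → ℕ, ∀ a : Fin n → ℕ, b₀ ≤ a → f a = f b₀ := by
  rcases Nat.eq_zero_or_pos n with h0 | hn
  · subst h0
    exact ⟨fun i => 0, fun a _ => congrArg f (funext fun i => i.elim0)⟩
  · have hsm : StrictMono (fun k : ℕ => (fun _ : Fin n => k)) := by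
      intro k m hkm
      refine Pi.lt_def.mpr ⟨fun i => le_of_lt hkm, ⟨0, hn⟩, hkm⟩
    obtain ⟨N, hN⟩ := hchain _ hsm
    refine ⟨fun _ => N, fun a ha => ?_⟩
    set M : ℕ := N + Finset.univ.sup a with hM
    have h1 : a ≤ fun _ : Fin n => M := fun i =>
      le_trans (Finset.le_sup (Finset.mem_univ i)) (Nat.le_add_left _ _)
    have h2 : f (fun _ : Fin n => M) = f (fun _ : Fin n => N) :=
      hN M (Nat.le_add_right _ _)
    exact le_antisymm (hf ha) (h2 ▸ hf h1)
end

section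
/- Fix D and d. There exists a constant C = C(D,d) such that for every d-tuple 𝒜 of D×D complex matrices: if for some N the span of all length-N products A_{i₁}⋯A_{i_N} equals M_D(ℂ), then already the span of all length-C products equals M_D(ℂ). -/
/-- `𝒜` is `N`-injective if the length-`N` products of its matrices span
all of `M_D(ℂ)`. -/
def NInjective {D d : ℕ} (A : Fin d → Matrix (Fin D) (Fin D) ℂ) (N : ℕ) : Prop :=
  Submodule.span ℂ
    {M | ∃ i : Fin N → Fin d, M = (List.ofFn fun k => A (i k)).prod} = ⊤

/-!
Let `Sₙ` be the span of the length-`n` products; then `Sₙ₊₁ = ∑ⱼ Aⱼ · Sₙ`. Hence if `Sₙ` is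
everything, `Sₙ₊₁ = ∑ⱼ Aⱼ · M_D(ℂ) ⊇ Sₙ` is everything too, as long as `n ≥ 1`. A tuple fails to
be `N`-injective exactly when every determinant of `D²` length-`N` products, written in the
standard basis, vanishes; these determinants are polynomials in the entries, so the
non-`N`-injective tuples form a descending chain of Zariski closed sets. Their vanishing ideals
form an ascending chain in a Noetherian polynomial ring, which stabilizes at some `C`, and a zero
locus is recovered from its vanishing ideal. Length `0` is separate: the only empty product is
`1`, so `0`-injectivity does not depend on the tuple.
-/

open MvPolynomial Matrix Module Submodule Set

section WordProd

variable {ι M : Type*}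

def wordProd [Monoid M] (A : ι → M) {N : ℕ} (w : Fin N → ι) : M :=
  (List.ofFn fun k => A (w k)).prod

@[simp]
lemma wordProd_zero [Monoid M] (A : ι → M) (w : Fin 0 → ι) : wordProd A w = 1 := by
  simp [wordProd]

lemma wordProd_cons [Monoid M] (A : ι → M) {N : ℕ} (j : ι) (w : Fin N → ι) :
    wordProd A (Fin.cons j w : Fin (N + 1) → ι) = A j * wordProd A w := by
  simp [wordProd, List.ofFn_succ]

lemma map_wordProd [Monoid M] {M' F : Type*} [Monoid M'] [FunLike F M M'] [MonoidHomClass F M M']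
    (f : F) (A : ι → M) {N : ℕ} (w : Fin N → ι) :
    f (wordProd A w) = wordProd (fun i => f (A i)) w := by
  simp [wordProd, map_list_prod, List.map_ofFn, Function.comp_def]

variable {R : Type*} [CommSemiring R] [Semiring M] [Algebra R M]

lemma range_wordProd_succ (A : ι → M) (N : ℕ) :
    range (wordProd A (N := N + 1)) = ⋃ j, (A j * ·) '' range (wordProd A (N := N)) := by
  ext P
  simp only [mem_range, mem_iUnion, mem_image, exists_exists_eq_and]
  constructor
  · rintro ⟨w, rfl⟩
    exact ⟨w 0, Fin.tail w, by rw [← wordProd_cons, Fin.cons_self_tail]⟩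
  · rintro ⟨j, w, rfl⟩
    exact ⟨Fin.cons j w, wordProd_cons A j w⟩

lemma span_range_wordProd_succ (A : ι → M) (N : ℕ) :
    span R (range (wordProd A (N := N + 1))) =
      ⨆ j, (span R (range (wordProd A (N := N)))).map (LinearMap.mulLeft R (A j)) := by
  simp_rw [range_wordProd_succ, span_iUnion, Submodule.map_span]
  rfl

lemma span_range_wordProd_succ_succ_eq_top (A : ι → M) {N : ℕ}
    (h : span R (range (wordProd A (N := N + 1))) = ⊤) :
    span R (range (wordProd A (N := N + 2))) = ⊤ := by
  refine eq_top_iff.mpr ?_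
  calc ⊤ = span R (range (wordProd A (N := N + 1))) := h.symm
    _ = ⨆ j, (span R (range (wordProd A (N := N)))).map (LinearMap.mulLeft R (A j)) :=
      span_range_wordProd_succ A N
    _ ≤ ⨆ j, (⊤ : Submodule R M).map (LinearMap.mulLeft R (A j)) :=
      iSup_mono fun _ => map_mono le_top
    _ = span R (range (wordProd A (N := N + 2))) := by
      rw [span_range_wordProd_succ A (N + 1), h]

end WordProd

theorem Module.Basis.span_range_eq_top_iff_exists_det_ne_zero {K V κ α : Type*} [Field K]
    [AddCommGroup V] [Module K V] [Fintype κ] [DecidableEq κ] (e : Basis κ K V) (v : α → V) :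
    span K (range v) = ⊤ ↔ ∃ f : κ → α, e.det (v ∘ f) ≠ 0 := by
  constructor
  · intro hv
    let b := (Basis.ofSpan hv.ge).reindex ((Basis.ofSpan hv.ge).indexEquiv e)
    have hb : ∀ k, ∃ a, v a = b k := fun k =>
      Basis.ofSpan_subset hv.ge (by simp [b])
    choose f hf using hb
    refine ⟨f, ?_⟩
    rw [show v ∘ f = b from funext hf]
    exact (e.isUnit_det b).ne_zero
  · rintro ⟨f, hf⟩
    have hspan := (e.is_basis_iff_det.mpr (isUnit_iff_ne_zero.mpr hf)).2
    exact eq_top_iff.mpr (hspan.ge.trans (span_mono (range_comp_subset_range f v)))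

theorem MvPolynomial.exists_zeroLocus_eq_of_antitone {σ k K : Type*} [Field k] [Field K]
    [Algebra k K] [Finite σ] (I : ℕ → Ideal (MvPolynomial σ k))
    (hI : Antitone fun n => zeroLocus K (I n)) :
    ∃ C, ∀ n ≥ C, zeroLocus K (I n) = zeroLocus K (I C) := by
  obtain ⟨C, hC⟩ := WellFoundedGT.monotone_chain_condition
    ⟨fun n => vanishingIdeal k (zeroLocus K (I n)), fun _ _ hmn => vanishingIdeal_anti_mono (hI hmn)⟩
  refine ⟨C, fun n hn => ?_⟩
  have gc := zeroLocus_vanishingIdeal_galoisConnection (k := k) (K := K) (σ := σ)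
  rw [← gc.l_u_l_eq_l (I n), ← gc.l_u_l_eq_l (I C)]
  exact congrArg _ (hC n hn).symm

section GenericMatrix

variable {ι n R : Type*}

def tupleCoords (A : ι → Matrix n n R) : ι × n × n → R :=
  fun p => A p.1 p.2.1 p.2.2

lemma tupleCoords_surjective : Function.Surjective (tupleCoords (ι := ι) (n := n) (R := R)) :=
  fun x => ⟨fun i => of fun a b => x (i, a, b), rfl⟩

variable [Fintype n] [DecidableEq n] (R) [CommRing R]

noncomputable def genericMatrix (i : ι) : Matrix n n (MvPolynomial (ι × n × n) R) :=
  of fun a b => X (i, a, b)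

noncomputable def wordDet {N : ℕ} (f : n × n → Fin N → ι) : MvPolynomial (ι × n × n) R :=
  (stdBasis _ n n).det fun k => wordProd (genericMatrix R) (f k)

variable {R}

lemma eval_wordDet (A : ι → Matrix n n R) {N : ℕ} (f : n × n → Fin N → ι) :
    eval (tupleCoords A) (wordDet R f) = (stdBasis R n n).det fun k => wordProd A (f k) := by
  have hA : (fun i => (eval (tupleCoords A)).mapMatrix (genericMatrix R i)) = A := by
    ext i a b
    simp [genericMatrix, tupleCoords]
  rw [wordDet, Basis.det_apply, Basis.det_apply, RingHom.map_det]
  congr 1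
  ext k l
  calc eval (tupleCoords A) (wordProd (genericMatrix R) (f l) k.1 k.2)
      = (eval (tupleCoords A)).mapMatrix (wordProd (genericMatrix R) (f l)) k.1 k.2 := rfl
    _ = wordProd A (f l) k.1 k.2 := by rw [map_wordProd, hA]

end GenericMatrix

section NInjective

variable {D d : ℕ}

lemma nInjective_iff_span_range_wordProd (A : Fin d → Matrix (Fin D) (Fin D) ℂ) (N : ℕ) :
    NInjective A N ↔ span ℂ (range (wordProd A (N := N))) = ⊤ := by
  unfold NInjective
  congr! 2
  ext M
  simp [wordProd, eq_comm]

lemma nInjective_zero_iff (A : Fin d → Matrix (Fin D) (Fin D) ℂ) :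
    NInjective A 0 ↔ span ℂ {(1 : Matrix (Fin D) (Fin D) ℂ)} = ⊤ := by
  simp [nInjective_iff_span_range_wordProd, range_unique]

lemma NInjective.succ {A : Fin d → Matrix (Fin D) (Fin D) ℂ} {N : ℕ} (h : NInjective A N)
    (hN : N ≠ 0) : NInjective A (N + 1) := by
  obtain ⟨N, rfl⟩ := Nat.exists_eq_succ_of_ne_zero hN
  rw [nInjective_iff_span_range_wordProd] at h ⊢
  exact span_range_wordProd_succ_succ_eq_top A h

lemma NInjective.mono {A : Fin d → Matrix (Fin D) (Fin D) ℂ} {N M : ℕ} (h : NInjective A N)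
    (hN : N ≠ 0) (hNM : N ≤ M) : NInjective A M := by
  induction M, hNM using Nat.le_induction with
  | base => exact h
  | succ M hNM ih => exact ih.succ (by omega)

variable (D d) in
noncomputable def nonInjectiveIdeal (N : ℕ) : Ideal (MvPolynomial (Fin d × Fin D × Fin D) ℂ) :=
  Ideal.span (range fun f : Fin D × Fin D → Fin N → Fin d => wordDet ℂ f)

lemma tupleCoords_notMem_zeroLocus_iff (A : Fin d → Matrix (Fin D) (Fin D) ℂ) (N : ℕ) :
    tupleCoords A ∉ zeroLocus ℂ (nonInjectiveIdeal D d N) ↔ NInjective A N := by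
  simp [nonInjectiveIdeal, zeroLocus_span, aeval_eq_eval, eval_wordDet,
    nInjective_iff_span_range_wordProd, (stdBasis ℂ _ _).span_range_eq_top_iff_exists_det_ne_zero,
    Function.comp_def]

lemma antitone_zeroLocus_nonInjectiveIdeal :
    Antitone fun N => zeroLocus ℂ (nonInjectiveIdeal D d (N + 1)) := by
  refine antitone_nat_of_succ_le fun N x hx => ?_
  obtain ⟨A, rfl⟩ := tupleCoords_surjective x
  by_contra hA
  rw [tupleCoords_notMem_zeroLocus_iff] at hA
  exact (tupleCoords_notMem_zeroLocus_iff A _).2 (hA.succ N.succ_ne_zero) hx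

end NInjective

/-- Non-effective quantum Wielandt theorem. -/
theorem quantum_wielandt (D d : ℕ) :
    ∃ C : ℕ, ∀ A : Fin d → Matrix (Fin D) (Fin D) ℂ,
      (∃ N : ℕ, NInjective A N) → NInjective A C := by
  by_cases h0 : ∃ A₀ : Fin d → Matrix (Fin D) (Fin D) ℂ, NInjective A₀ 0
  · obtain ⟨A₀, hA₀⟩ := h0
    exact ⟨0, fun A _ => (nInjective_zero_iff A).2 ((nInjective_zero_iff A₀).1 hA₀)⟩
  obtain ⟨C, hC⟩ := exists_zeroLocus_eq_of_antitone _ antitone_zeroLocus_nonInjectiveIdeal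
  refine ⟨C + 1, fun A ⟨N, hN⟩ => ?_⟩
  have hN0 : N ≠ 0 := by
    rintro rfl
    exact h0 ⟨A, hN⟩
  have hM : NInjective A (max N C + 1) := hN.mono hN0 (by omega)
  rw [← tupleCoords_notMem_zeroLocus_iff] at hM ⊢
  rwa [← hC (max N C) (le_max_right N C)]
end

section
/- Let f : ℕ^n → P be an antitone map to a poset P such that every chain in the image stabilizes (i.e., the image satisfies the descending chain condition along strictly increasing sequences in ℕ^n). Then the image of f is finite. -/
/-!
An infinite range yields a sequence `a` in `ℕ^n` on which `f` is injective. By Dickson's lemma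
`ℕ^n` is well-quasi-ordered, so `a` has a monotone subsequence, which is strictly monotone because
its terms are distinct. Along it `f` must stabilise, contradicting injectivity.
-/

open Function Set

theorem Set.Infinite.exists_nat_injective_comp {α β : Type*} {f : α → β}
    (h : (range f).Infinite) : ∃ a : ℕ → α, Injective (f ∘ a) := by
  choose a ha using fun k => (h.natEmbedding _ k).2
  refine ⟨a, fun i j hij => (h.natEmbedding _).injective (Subtype.ext ?_)⟩
  simpa only [comp_apply, ha] using hij

theorem exists_strictMono_subseq_of_injective {α : Type*} [PartialOrder α]
    [WellQuasiOrderedLE α] {a : ℕ → α} (ha : Injective a) :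
    ∃ g : ℕ ↪o ℕ, StrictMono (a ∘ g) := by
  obtain ⟨g, hg⟩ := wellQuasiOrdered_le.exists_monotone_subseq a
  exact ⟨g, Monotone.strictMono_of_injective (fun m n hmn => hg m n hmn) (ha.comp g.injective)⟩

theorem finite_range_of_forall_strictMono_eventually_eq {α β : Type*} [PartialOrder α]
    [WellQuasiOrderedLE α] {f : α → β}
    (hf : ∀ a : ℕ → α, StrictMono a → ∃ N : ℕ, ∀ k ≥ N, f (a k) = f (a N)) :
    (range f).Finite := by
  by_contra hfin
  obtain ⟨a, hinj⟩ := Set.Infinite.exists_nat_injective_comp hfin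
  obtain ⟨g, hg⟩ := exists_strictMono_subseq_of_injective hinj.of_comp
  obtain ⟨N, hN⟩ := hf (a ∘ g) hg
  have : g (N + 1) = g N := hinj (hN (N + 1) N.le_succ)
  exact N.succ_ne_self (g.injective this)

theorem antitone_dcc_finite_range_general {n : ℕ} {P : Type*}
    (f : (Fin n → ℕ) → P)
    (hchain : ∀ a : ℕ → (Fin n → ℕ), StrictMono a →
      ∃ N : ℕ, ∀ k ≥ N, f (a k) = f (a N)) :
    (Set.range f).Finite :=
  finite_range_of_forall_strictMono_eventually_eq hchain

theorem antitone_dcc_finite_range {n : ℕ} {P : Type*} [PartialOrder P]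
    (f : (Fin n → ℕ) → P) (hf : Antitone f)
    (hchain : ∀ a : ℕ → (Fin n → ℕ), StrictMono a →
      ∃ N : ℕ, ∀ k ≥ N, f (a k) = f (a N)) :
    (Set.range f).Finite :=
  antitone_dcc_finite_range_general f hchain
end
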